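/- arXiv:1103.1829 — 5 statements merged into one kernel-verified Lean document; each statement's English description precedes it below -/
import Mathlib

section
/- For a finite set of square matrices 𝓜 = {M₁,…,Mₙ} and any positive integers n and k, ρ_{nk}(𝓜) ≥ ρ_k(𝓜), where ρ_k(𝓜) is the maximum over all products of k matrices from 𝓜 of the k-th root of the spectral radius of the product. Consequently the generalized spectral radius ρ(𝓜) = limsup_k ρ_k(𝓜) equals sup_k ρ_k(𝓜). -/
/-!
Repeating a word of length `k` periodically `m` times gives a word of length `m * k` whose
product is the `m`-th power of the original product; since the spectral radius commutes with
powers, the two words contribute the same normalised value `ρ(P)^(1/k) = ρ(P^m)^(1/(mk))`. Hence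
`ρ_k ≤ ρ_{mk}`, so `ρ_k ≤ ρ_j` for arbitrarily large `j`. As
`ρ(P) ≤ ‖P‖ ≤ ∏ ‖A_i‖` for a submultiplicative norm, the sequence is bounded by `∑ ‖A_i‖`, and its
limsup is its supremum.
-/

open Matrix BigOperators Filter

/-- The spectral radius of a real square matrix: supremum of moduli of complex eigenvalues. -/
noncomputable def specRad {d : ℕ} (M : Matrix (Fin d) (Fin d) ℝ) : ℝ :=
  sSup ((fun z : ℂ => ‖z‖) '' spectrum ℂ (M.map Complex.ofReal))

/-- `rhoK A k` = max over products of `k` matrices from the family `A` of the `k`-th root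
of the spectral radius of the product. -/
noncomputable def rhoK {d n : ℕ} (A : Fin n → Matrix (Fin d) (Fin d) ℝ) (k : ℕ) : ℝ :=
  ⨆ f : Fin k → Fin n, specRad ((List.ofFn fun i => A (f i)).prod) ^ ((1 : ℝ) / (k : ℝ))

section SpectralRadius

variable {d : ℕ}

lemma specRad_nonneg (M : Matrix (Fin d) (Fin d) ℝ) : 0 ≤ specRad M :=
  Real.sSup_nonneg (by rintro _ ⟨z, -, rfl⟩; exact norm_nonneg z)

lemma Real.sSup_image_pow_of_nonneg {T : Set ℝ} (hT : BddAbove T) (h0 : ∀ x ∈ T, 0 ≤ x)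
    {m : ℕ} (hm : m ≠ 0) : sSup ((· ^ m) '' T) = sSup T ^ m := by
  rcases T.eq_empty_or_nonempty with rfl | hne
  · simp [zero_pow hm]
  · exact (MonotoneOn.map_csSup_of_continuousWithinAt (continuous_pow m).continuousWithinAt
      (fun x hx _ _ hxy => pow_le_pow_left₀ (h0 x hx) hxy m) hne hT).symm

lemma specRad_pow (M : Matrix (Fin d) (Fin d) ℝ) {m : ℕ} (hm : m ≠ 0) :
    specRad (M ^ m) = specRad M ^ m := by
  have hmap : (M ^ m).map Complex.ofReal = M.map Complex.ofReal ^ m :=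
    map_pow Complex.ofRealHom.mapMatrix M m
  rw [specRad, specRad, hmap, spectrum.map_pow_of_pos _ (Nat.pos_of_ne_zero hm),
    Set.image_image]
  simp_rw [norm_pow]
  rw [← Set.image_image (· ^ m) (fun z : ℂ => ‖z‖)]
  exact Real.sSup_image_pow_of_nonneg ((Matrix.finite_spectrum _).image _).bddAbove
    (by rintro _ ⟨z, -, rfl⟩; exact norm_nonneg z) hm

section LinftyOpNorm

attribute [local instance] Matrix.linftyOpNormedRing Matrix.linftyOpNormedAlgebra

lemma specRad_le_norm (M : Matrix (Fin d) (Fin d) ℝ) : specRad M ≤ ‖M.map Complex.ofReal‖ := by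
  refine Real.sSup_le ?_ (norm_nonneg _)
  rintro _ ⟨z, hz, rfl⟩
  -- `‖1‖ = 1` for the operator norm only when the index type is nonempty
  rcases isEmpty_or_nonempty (Fin d) with hd | hd
  · simp [spectrum.of_subsingleton] at hz
  · exact spectrum.norm_le_norm_of_mem hz

lemma specRad_list_prod_le {ι : Type*} (A : ι → Matrix (Fin d) (Fin d) ℝ) {C : ℝ}
    (hA : ∀ i, ‖(A i).map Complex.ofReal‖ ≤ C) {k : ℕ} (hk : k ≠ 0) (f : Fin k → ι) :
    specRad (List.ofFn fun i => A (f i)).prod ≤ C ^ k := by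
  have hmap : ((List.ofFn fun i => A (f i)).prod).map Complex.ofReal
      = (List.ofFn fun i => (A (f i)).map Complex.ofReal).prod :=
    (map_list_prod (Complex.ofRealHom.mapMatrix (m := Fin d)) _).trans
      (congrArg List.prod List.map_ofFn)
  calc specRad (List.ofFn fun i => A (f i)).prod
      ≤ ‖(List.ofFn fun i => (A (f i)).map Complex.ofReal).prod‖ :=
        hmap ▸ specRad_le_norm _
    _ ≤ ((List.ofFn fun i => (A (f i)).map Complex.ofReal).map norm).prod :=
        List.norm_prod_le' (by simpa using hk)
    _ = ∏ i, ‖(A (f i)).map Complex.ofReal‖ := by rw [List.map_ofFn, List.prod_ofFn]; rfl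
    _ ≤ ∏ _i : Fin k, C := Finset.prod_le_prod (fun _ _ => norm_nonneg _) fun i _ => hA (f i)
    _ = C ^ k := by simp

lemma rhoK_le_sum_norm {n : ℕ} (A : Fin n → Matrix (Fin d) (Fin d) ℝ) {k : ℕ} (hk : k ≠ 0) :
    rhoK A k ≤ ∑ i, ‖(A i).map Complex.ofReal‖ := by
  set C := ∑ i, ‖(A i).map Complex.ofReal‖
  have hC : 0 ≤ C := Finset.sum_nonneg fun _ _ => norm_nonneg _
  have hAC : ∀ i, ‖(A i).map Complex.ofReal‖ ≤ C := fun i =>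
    Finset.single_le_sum (f := fun i => ‖(A i).map Complex.ofReal‖)
      (fun _ _ => norm_nonneg _) (Finset.mem_univ i)
  refine Real.iSup_le (fun f => ?_) hC
  calc specRad (List.ofFn fun i => A (f i)).prod ^ ((1 : ℝ) / k)
      ≤ (C ^ k) ^ ((1 : ℝ) / k) :=
        Real.rpow_le_rpow (specRad_nonneg _) (specRad_list_prod_le A hAC hk f) (by positivity)
    _ = C := by rw [one_div, Real.pow_rpow_inv_natCast hC hk]

end LinftyOpNorm

end SpectralRadius

lemma List.prod_ofFn_modNat {M : Type*} [Monoid M] {k : ℕ} (g : Fin k → M) (m : ℕ) :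
    (List.ofFn fun i : Fin (m * k) => g i.modNat).prod = (List.ofFn g).prod ^ m := by
  rw [List.ofFn_mul, List.prod_flatten]
  refine (List.prod_eq_pow_card _ (List.ofFn g).prod ?_).trans (by simp)
  simp only [List.mem_map, List.mem_ofFn]
  rintro _ ⟨_, ⟨i, rfl⟩, rfl⟩
  congr 2
  funext j
  congr 1
  ext
  simp [Fin.modNat, Nat.add_mod, Nat.mod_eq_of_lt j.2]

lemma rhoK_nonneg {d n : ℕ} (A : Fin n → Matrix (Fin d) (Fin d) ℝ) (k : ℕ) : 0 ≤ rhoK A k :=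
  Real.iSup_nonneg fun _ => Real.rpow_nonneg (specRad_nonneg _) _

lemma rhoK_le_rhoK_mul {d n : ℕ} (A : Fin n → Matrix (Fin d) (Fin d) ℝ) {m : ℕ} (hm : m ≠ 0)
    (k : ℕ) : rhoK A k ≤ rhoK A (m * k) := by
  rcases Nat.eq_zero_or_pos k with rfl | hk
  · rw [mul_zero]
  refine Real.iSup_le (fun f => ?_) (rhoK_nonneg A _)
  set P := (List.ofFn fun i => A (f i)).prod
  calc specRad P ^ ((1 : ℝ) / k)
      = specRad (P ^ m) ^ ((1 : ℝ) / (m * k : ℕ)) := by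
        rw [specRad_pow _ hm, ← Real.rpow_natCast, ← Real.rpow_mul (specRad_nonneg _)]
        congr 1
        push_cast
        field_simp
    _ = specRad (List.ofFn fun i : Fin (m * k) => A (f i.modNat)).prod
          ^ ((1 : ℝ) / (m * k : ℕ)) := by
        rw [List.prod_ofFn_modNat (fun i => A (f i))]
    _ ≤ rhoK A (m * k) :=
        le_ciSup (f := fun g : Fin (m * k) → Fin n =>
          specRad (List.ofFn fun i => A (g i)).prod ^ ((1 : ℝ) / (m * k : ℕ)))
          (Finite.bddAbove_range _) (fun i => f i.modNat)

theorem limsup_eq_iSup_succ_of_le_mul {α : Type*} [ConditionallyCompleteLinearOrder α]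
    {u : ℕ → α} {C : α} (hC : ∀ k, 0 < k → u k ≤ C)
    (hmul : ∀ m k : ℕ, 0 < m → 0 < k → u k ≤ u (m * k)) :
    limsup u atTop = ⨆ k : ℕ, u (k + 1) := by
  have hbdd : BddAbove (Set.range fun k => u (k + 1)) :=
    ⟨C, by rintro _ ⟨k, rfl⟩; exact hC _ k.succ_pos⟩
  have hfreq : ∀ k, ∃ᶠ j in atTop, u (k + 1) ≤ u j := fun k =>
    frequently_atTop.2 fun N =>
      ⟨(N + 1) * (k + 1), Nat.le_mul_of_pos_right _ k.succ_pos |>.trans' N.le_succ,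
        hmul _ _ N.succ_pos k.succ_pos⟩
  apply le_antisymm
  · refine limsup_le_of_le (IsCoboundedUnder.of_frequently_ge (hfreq 0)) ?_
    filter_upwards [eventually_gt_atTop 0] with k hk
    obtain ⟨j, rfl⟩ := Nat.exists_eq_succ_of_ne_zero hk.ne'
    exact le_ciSup hbdd j
  · exact ciSup_le fun k => le_limsup_of_frequently_le (hfreq k)
      (isBoundedUnder_of_eventually_le (eventually_gt_atTop 0 |>.mono hC))

theorem stmt_3_general (d n : ℕ)
    (A : Fin n → Matrix (Fin d) (Fin d) ℝ) :
    (∀ m k : ℕ, 0 < m → 0 < k → rhoK A k ≤ rhoK A (m * k)) ∧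
    Filter.limsup (rhoK A) Filter.atTop = ⨆ k : ℕ, rhoK A (k + 1) := by
  have hmul : ∀ m k : ℕ, 0 < m → 0 < k → rhoK A k ≤ rhoK A (m * k) :=
    fun m k hm _ => rhoK_le_rhoK_mul A hm.ne' k
  exact ⟨hmul, limsup_eq_iSup_succ_of_le_mul (fun k hk => rhoK_le_sum_norm A hk.ne') hmul⟩

theorem stmt_3 (d n : ℕ) (hd : 0 < d) (hn : 0 < n)
    (A : Fin n → Matrix (Fin d) (Fin d) ℝ) :
    (∀ m k : ℕ, 0 < m → 0 < k → rhoK A k ≤ rhoK A (m * k)) ∧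
    Filter.limsup (rhoK A) Filter.atTop = ⨆ k : ℕ, rhoK A (k + 1) :=
  stmt_3_general d n A
end

section
/- Define Ĥ^{(N)} = A^{(1)} A^{(2)} ⋯ A^{(N)}, the ordered product of the matrices A^{(k)} = I + S^{(k)}. Then for each 1 ≤ j ≤ N the j-th column sum of Ĥ^{(N)} is 3^N − 2·3^{j−1}, and the trace of Ĥ^{(N)} is 3^N − N − 1. -/
/-!
Read everything through row vectors: `v ᵥ* A^(k)` adds `2 v_k` to every entry except the `k`-th.
Starting from a vector that is constant `c` from index `m` on, the factors `A^(m), A^(m+1), …`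
therefore keep a constant tail that triples at each step, and every entry acquires an explicit
geometric-sum value. The column sums of `Ĥ^(N)` are the entries of `𝟙 ᵥ* Ĥ^(N)` (tail constant `1`
from the start), giving `3^N - 2·3^j`. For the diagonal entry `(i, i)` one follows `e_i`: the factors
before `A^(i)` fix it, `A^(i)` turns it into the vector with `1` at `i` and `2` elsewhere, and the
remaining factors give `2·3^(N-1-i) - 1`; summing over `i` is a geometric sum.
-/

open Matrix BigOperators

/-- `Amat N k` is the matrix `I + S^(k)` (0-indexed `k`): row `k` of `S^(k)` is `2`
everywhere except `0` on the diagonal, and all other rows of `S^(k)` are zero. -/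
def Amat (N : ℕ) (k : ℕ) : Matrix (Fin N) (Fin N) ℝ :=
  fun i j => (if i = j then 1 else 0) + (if (i : ℕ) = k ∧ (j : ℕ) ≠ k then 2 else 0)

/-- The ordered product `Ĥ^(N) = A^(1) A^(2) ⋯ A^(N)`. -/
noncomputable def Hhat (N : ℕ) : Matrix (Fin N) (Fin N) ℝ :=
  ((List.range N).map (Amat N)).prod

namespace Amat

variable {N : ℕ}

theorem vecMul_apply (v : Fin N → ℝ) {k : ℕ} (hk : k < N) (j : Fin N) :
    (v ᵥ* Amat N k) j = if (j : ℕ) = k then v j else v j + 2 * v ⟨k, hk⟩ := by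
  have hA : ∀ l, Amat N k l j =
      (if l = j then 1 else 0) + if l = ⟨k, hk⟩ then (if (j : ℕ) ≠ k then 2 else 0) else 0 := by
    intro l; simp [Amat, Fin.ext_iff, ite_and]
  simp only [vecMul, dotProduct, hA, mul_add, Finset.sum_add_distrib, mul_ite, mul_zero,
    mul_one, Finset.sum_ite_eq', Finset.mem_univ, if_true]
  split_ifs <;> first | omega | ring

theorem vecMul_eq_self {v : Fin N → ℝ} {k : ℕ} (hk : k < N) (hv : v ⟨k, hk⟩ = 0) :
    v ᵥ* Amat N k = v := by
  ext j
  rw [vecMul_apply _ hk, hv, mul_zero, add_zero, ite_self]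

end Amat

noncomputable def Aprod (N m d : ℕ) : Matrix (Fin N) (Fin N) ℝ :=
  ((List.range' m d).map (Amat N)).prod

theorem Aprod_succ (N m d : ℕ) : Aprod N m (d + 1) = Aprod N m d * Amat N (m + d) := by
  simp [Aprod, List.range'_1_concat]

theorem Aprod_add (N m d e : ℕ) : Aprod N m (d + e) = Aprod N m d * Aprod N (m + d) e := by
  simp [Aprod, ← List.range'_append_1]

theorem Hhat_eq_Aprod (N : ℕ) : Hhat N = Aprod N 0 N := by
  rw [Hhat, Aprod, List.range_eq_range']

theorem vecMul_Aprod_eq_self {N m d : ℕ} (hmd : m + d ≤ N) {v : Fin N → ℝ}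
    (hv : ∀ j : Fin N, m ≤ j → (j : ℕ) < m + d → v j = 0) : v ᵥ* Aprod N m d = v := by
  induction d with
  | zero => simp [Aprod]
  | succ d ih =>
    rw [Aprod_succ, ← vecMul_vecMul, ih (by omega) fun j h₁ h₂ => hv j h₁ (by omega)]
    exact Amat.vecMul_eq_self (by omega) (hv _ (by simp) (by simp))

theorem vecMul_Aprod_apply {N m d : ℕ} (hmd : m + d ≤ N) {v : Fin N → ℝ} {c : ℝ}
    (hv : ∀ j : Fin N, m ≤ j → v j = c) (j : Fin N) :
    (v ᵥ* Aprod N m d) j =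
      if (j : ℕ) < m then v j + c * (3 ^ d - 1)
      else if (j : ℕ) < m + d then c * (3 ^ d - 2 * 3 ^ ((j : ℕ) - m))
      else 3 ^ d * c := by
  induction d generalizing j with
  | zero =>
    simp only [Aprod, List.range'_zero, List.map_nil, List.prod_nil, vecMul_one]
    split_ifs with h₁ h₂
    · simp
    · omega
    · simp [hv j (by omega)]
  | succ d ih =>
    have hmdN : m + d < N := by omega
    have hpivot : (v ᵥ* Aprod N m d) ⟨m + d, hmdN⟩ = 3 ^ d * c := by
      rw [ih (by omega)]; simp
    rw [Aprod_succ, ← vecMul_vecMul, Amat.vecMul_apply _ hmdN, hpivot, ih (by omega)]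
    split_ifs <;> first | omega | (rw [show (j : ℕ) - m = d by omega]; ring) | ring

theorem sum_Hhat_apply {N : ℕ} (j : Fin N) : ∑ i, Hhat N i j = 3 ^ N - 2 * 3 ^ (j : ℕ) := by
  have h := vecMul_Aprod_apply (m := 0) (d := N) (by simp) (v := fun _ => 1) (c := 1)
    (fun _ _ => rfl) j
  simp only [Nat.not_lt_zero, if_false, zero_add, j.isLt, if_true, Nat.sub_zero, one_mul] at h
  rw [← h, Hhat_eq_Aprod]
  simp [vecMul, dotProduct]

theorem Hhat_apply_self {N : ℕ} (i : Fin N) : Hhat N i i = 2 * 3 ^ (N - 1 - i) - 1 := by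
  have hsplit : Hhat N = Aprod N 0 i * Amat N i * Aprod N (i + 1) (N - 1 - i) := by
    calc Hhat N = Aprod N 0 (i + 1 + (N - 1 - i)) := by rw [Hhat_eq_Aprod]; congr 1; omega
      _ = _ := by simp only [Aprod_add, Aprod_succ, zero_add]
  have hprefix : Pi.single i 1 ᵥ* Aprod N 0 i = Pi.single i 1 :=
    vecMul_Aprod_eq_self (by omega) fun j _ hj =>
      Pi.single_eq_of_ne (Fin.ne_of_lt (by simpa using hj)) _
  have hpivot : ∀ j : Fin N, i + 1 ≤ (j : ℕ) → (Pi.single i 1 ᵥ* Amat N i) j = 2 := by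
    intro j hj
    rw [Amat.vecMul_apply _ i.isLt, if_neg (by omega), Pi.single_eq_of_ne (by omega),
      Pi.single_eq_same]
    ring
  have h := vecMul_Aprod_apply (d := N - 1 - i) (by omega) hpivot i
  rw [if_pos (Nat.lt_succ_self i), Amat.vecMul_apply _ i.isLt, if_pos rfl, Pi.single_eq_same] at h
  calc Hhat N i i = (Pi.single i 1 ᵥ* Hhat N) i := by rw [single_one_vecMul]; rfl
    _ = 2 * 3 ^ (N - 1 - i) - 1 := by
      rw [hsplit, ← vecMul_vecMul, ← vecMul_vecMul, hprefix, h]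
      ring

theorem trace_Hhat (N : ℕ) : trace (Hhat N) = 3 ^ N - N - 1 := by
  have hgeom := geom_sum_mul (3 : ℝ) N
  rw [trace, Finset.sum_congr (f := diag (Hhat N)) rfl fun i _ => Hhat_apply_self i,
    Fin.sum_univ_eq_sum_range (fun i => 2 * (3 : ℝ) ^ (N - 1 - i) - 1), Finset.sum_sub_distrib,
    ← Finset.mul_sum, Finset.sum_range_reflect (fun i => (3 : ℝ) ^ i)]
  simp only [Finset.sum_const, Finset.card_range, nsmul_eq_mul, mul_one]
  linarith

theorem stmt_12 (N : ℕ) :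
    (∀ j : Fin N, ∑ i, Hhat N i j = 3 ^ N - 2 * 3 ^ (j : ℕ)) ∧
    Matrix.trace (Hhat N) = 3 ^ N - N - 1 :=
  ⟨sum_Hhat_apply, trace_Hhat N⟩
end

section
/- More generally, for 1 ≤ k ≤ N, the partial product Ĥ^{(k)} = A^{(1)}⋯A^{(k)} satisfies c_j(Ĥ^{(k)}) = 3^k − 2·3^{j−1} for j ≤ k and c_j(Ĥ^{(k)}) = 3^k for j > k. -/
open Matrix BigOperators

/-- The partial ordered product `Ĥ^(k) = A^(1) A^(2) ⋯ A^(k)`. -/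
noncomputable def Hpart (N k : ℕ) : Matrix (Fin N) (Fin N) ℝ :=
  ((List.range k).map (Amat N)).prod

/-! Column sums propagate through a product as a row vector: `c(M A) = c(M) A`. Right
multiplication by `A^(k)` adds twice column `k` to every other column, so it adds `2 c_k` to every
column sum except the `k`-th. As `c_k(Ĥ^(k)) = 3^k` (the case `j ≥ k` of the claim), the closed
form follows by induction on `k`. -/

def colSum {ι R : Type*} [Fintype ι] [AddCommMonoid R] (M : Matrix ι ι R) : ι → R :=
  fun j => ∑ i, M i j

theorem colSum_mul {ι R : Type*} [Fintype ι] [NonUnitalNonAssocSemiring R] (M A : Matrix ι ι R) :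
    colSum (M * A) = colSum M ᵥ* A := by
  ext j
  simp only [colSum, mul_apply, vecMul, dotProduct, Finset.sum_mul]
  exact Finset.sum_comm

theorem Amat_eq {N : ℕ} (k : Fin N) :
    Amat N k = 1 + of fun i j => if i = k ∧ j ≠ k then 2 else 0 := by
  ext i j
  simp [Amat, one_apply, Fin.val_inj]

theorem vecMul_Amat_apply {N : ℕ} (v : Fin N → ℝ) (k j : Fin N) :
    (v ᵥ* Amat N k) j = v j + if j = k then 0 else 2 * v k := by
  rw [Amat_eq, vecMul_add, vecMul_one]
  by_cases h : j = k <;> simp [vecMul, dotProduct, h, mul_comm]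

theorem Hpart_succ (N k : ℕ) : Hpart N (k + 1) = Hpart N k * Amat N k := by
  simp [Hpart, List.range_succ]

theorem colSum_Hpart {N k : ℕ} (hk : k ≤ N) (j : Fin N) :
    colSum (Hpart N k) j = 3 ^ k - if (j : ℕ) < k then 2 * 3 ^ (j : ℕ) else 0 := by
  induction k generalizing j with
  | zero => simp [colSum, Hpart, one_apply]
  | succ k ih =>
    have hk' : k ≤ N := k.le_succ.trans hk
    let kk : Fin N := ⟨k, hk⟩
    have hkk : colSum (Hpart N k) kk = 3 ^ k := by simpa [kk] using ih hk' kk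
    rw [Hpart_succ, colSum_mul, vecMul_Amat_apply (k := kk), hkk, ih hk']
    rcases lt_trichotomy (j : ℕ) k with hj | hj | hj
    · rw [if_pos hj, if_neg (Fin.ne_of_val_ne hj.ne), if_pos (Nat.lt_succ_of_lt hj)]
      ring
    · rw [if_neg hj.not_lt, if_pos (Fin.ext hj), if_pos (hj ▸ k.lt_succ_self), hj]
      ring
    · rw [if_neg hj.not_gt, if_neg (Fin.ne_of_val_ne hj.ne'), if_neg (Nat.not_lt.2 hj)]
      ring

theorem stmt_13 (N k : ℕ) (hk : k ≤ N) :
    ∀ j : Fin N,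
      ((j : ℕ) < k → ∑ i, Hpart N k i j = 3 ^ k - 2 * 3 ^ (j : ℕ)) ∧
      (k ≤ (j : ℕ) → ∑ i, Hpart N k i j = 3 ^ k) := by
  intro j
  have h := colSum_Hpart hk j
  refine ⟨fun hj => ?_, fun hj => ?_⟩
  · simpa [colSum, hj] using h
  · simpa [colSum, Nat.not_lt.2 hj] using h
end

section
/- Define the sorting map S: (ℤ⁺)^N → 𝒪_N sending a vector of positive integers to its entries sorted in non-increasing order, and for 1 ≤ j ≤ N define W_j on sorted vectors by a·W_j = (a·A^{(j)})·S, where A^{(j)} = I + S^{(j)} acts on row vectors from the right. Then for sorted positive vectors a, b: (i) a ≥ b implies a·W_j ≥ b·W_j; (ii) a > b (strict in every entry) implies a·W_j > b·W_j; (iii) if j < k and a_j = a_k then a·W_j = a·W_k; (iv) if j < k and a_j > a_k then a·W_j > a·W_k; (v) if j ≤ k and a > b then a·W_j > b·W_k. -/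
open Matrix BigOperators

/-- `Wmap N j a` is the sorted result of `a · A^(j)` for a sorted positive vector `a`
(0-indexed `j`): drop entry `j`, add `2·a j` to every other entry (keeping their order),
and append `a j` at the end. -/
def Wmap (N : ℕ) (j : Fin N) (a : Fin N → ℕ) : Fin N → ℕ := fun i =>
  if _h : (i : ℕ) < (j : ℕ) then a i + 2 * a j
  else if h2 : (i : ℕ) + 1 < N then a ⟨(i : ℕ) + 1, h2⟩ + 2 * a j
  else a j

/-! For sorted `a` and `j ≤ k`, passing from `a·W_j` to `a·W_k` lowers every entry by at least
`a j - a k` and at most `2 (a j - a k)`: the last entry drops by `a j - a k`, entry `i` with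
`j ≤ i < k` by `2 (a j - a k) - (a i - a (i + 1))`, and all others by `2 (a j - a k)`. Together
with the entrywise monotonicity of each `W_j` this gives all five claims. -/

section Wmap

variable {N : ℕ}

theorem Wmap_mono (j : Fin N) : Monotone (Wmap N j) := by
  intro b a hab i
  unfold Wmap
  split_ifs with hij hi
  · exact add_le_add (hab i) (Nat.mul_le_mul_left 2 (hab j))
  · exact add_le_add (hab _) (Nat.mul_le_mul_left 2 (hab j))
  · exact hab j

theorem Wmap_lt_Wmap {a b : Fin N → ℕ} (j : Fin N) (hab : ∀ i, b i < a i) (i : Fin N) :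
    Wmap N j b i < Wmap N j a i := by
  unfold Wmap
  split_ifs with hij hi
  · exact add_lt_add (hab i) (Nat.mul_lt_mul_of_pos_left (hab j) two_pos)
  · exact add_lt_add (hab _) (Nat.mul_lt_mul_of_pos_left (hab j) two_pos)
  · exact hab j

variable {a : Fin N → ℕ} {j k : Fin N}

theorem Wmap_add_sub_le (ha : Antitone a) (hjk : j ≤ k) (i : Fin N) :
    Wmap N k a i + (a j - a k) ≤ Wmap N j a i := by
  have hak : a k ≤ a j := ha hjk
  unfold Wmap
  split_ifs with hik hij hiN
  all_goals try omega
  have : a i ≤ a j := ha (not_lt.mp hij)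
  have : a k ≤ a ⟨i + 1, hiN⟩ := ha (Nat.succ_le_of_lt hik)
  omega

theorem Wmap_le_add_sub (ha : Antitone a) (hjk : j ≤ k) (i : Fin N) :
    Wmap N j a i ≤ Wmap N k a i + 2 * (a j - a k) := by
  have hak : a k ≤ a j := ha hjk
  unfold Wmap
  split_ifs with hij _ _ hiN
  all_goals try omega
  have : a ⟨i + 1, hiN⟩ ≤ a i := ha (Nat.le_succ i)
  omega

end Wmap

theorem stmt_17_general (N : ℕ)
    (a b : Fin N → ℕ)
    (haSorted : ∀ i j : Fin N, i ≤ j → a j ≤ a i)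
    (hbSorted : ∀ i j : Fin N, i ≤ j → b j ≤ b i) :
    (∀ j : Fin N, (∀ i, b i ≤ a i) → ∀ i, Wmap N j b i ≤ Wmap N j a i) ∧
    (∀ j : Fin N, (∀ i, b i < a i) → ∀ i, Wmap N j b i < Wmap N j a i) ∧
    (∀ j k : Fin N, j < k → a j = a k → Wmap N j a = Wmap N k a) ∧
    (∀ j k : Fin N, j < k → a k < a j → ∀ i, Wmap N k a i < Wmap N j a i) ∧
    (∀ j k : Fin N, j ≤ k → (∀ i, b i < a i) → ∀ i, Wmap N k b i < Wmap N j a i) := by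
  have ha : Antitone a := fun i j => haSorted i j
  have hb : Antitone b := fun i j => hbSorted i j
  refine ⟨fun j hab => Wmap_mono j hab, Wmap_lt_Wmap, ?_, ?_, ?_⟩
  · intro j k hjk hajk
    funext i
    have h₁ := Wmap_add_sub_le ha hjk.le i
    have h₂ := Wmap_le_add_sub ha hjk.le i
    rw [hajk, Nat.sub_self] at h₁ h₂
    omega
  · intro j k hjk hakj i
    have := Wmap_add_sub_le ha hjk.le i
    omega
  · intro j k hjk hab i
    have := Wmap_add_sub_le hb hjk i
    exact (le_of_add_le_left this).trans_lt (Wmap_lt_Wmap j hab i)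

theorem stmt_17 (N : ℕ) (hN : 0 < N)
    (a b : Fin N → ℕ)
    (ha : ∀ i, 0 < a i) (hb : ∀ i, 0 < b i)
    (haSorted : ∀ i j : Fin N, i ≤ j → a j ≤ a i)
    (hbSorted : ∀ i j : Fin N, i ≤ j → b j ≤ b i) :
    (∀ j : Fin N, (∀ i, b i ≤ a i) → ∀ i, Wmap N j b i ≤ Wmap N j a i) ∧
    (∀ j : Fin N, (∀ i, b i < a i) → ∀ i, Wmap N j b i < Wmap N j a i) ∧
    (∀ j k : Fin N, j < k → a j = a k → Wmap N j a = Wmap N k a) ∧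
    (∀ j k : Fin N, j < k → a k < a j → ∀ i, Wmap N k a i < Wmap N j a i) ∧
    (∀ j k : Fin N, j ≤ k → (∀ i, b i < a i) → ∀ i, Wmap N k b i < Wmap N j a i) :=
  stmt_17_general N a b haSorted hbSorted
end

section
/- Let a = (1,1,…,1) ∈ (ℤ⁺)^N, let A^{(k)} = I + S^{(k)} be as above, and let ℓ = (1,2,…,k) for some k ≤ N. Then sorting the vector a·A^{(1)}A^{(2)}⋯A^{(k)} in non-increasing order gives the same result as applying k times the map W₁ (defined by b·W₁ = sort(b·A^{(1)})) to a; i.e., the strategy (1,2,…,k) realizes the all-ones strategy after sorting. -/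
open Matrix BigOperators

/-- `AmatN N k` is the matrix `I + S^(k)` over ℕ (0-indexed `k`). -/
def AmatN (N : ℕ) (k : ℕ) : Matrix (Fin N) (Fin N) ℕ :=
  fun i j => (if i = j then 1 else 0) + (if (i : ℕ) = k ∧ (j : ℕ) ≠ k then 2 else 0)

/-!
Starting from the all-ones vector, multiplying by `A^(1), …, A^(k)` in turn triples entry `j`
at step `j` and adds twice it to every other entry, so the product has entries `3^k - 2·3^j`
for `j < k` and `3^k` elsewhere. Starting from the same vector, `W₁^j` consists of a block of
`N - j` entries `3^j` followed by `3^j - 2·3^i` for `i < j`; one more application of `W₁`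
adds `2·3^j` to everything after the first entry and appends `3^j`, which gives the same shape
for `j + 1`. So `W₁^k` is the product vector rotated by `k`, and it is non-increasing.
-/

def strategyVec (N k : ℕ) : Fin N → ℕ := fun j =>
  if (j : ℕ) < k then 3 ^ k - 2 * 3 ^ (j : ℕ) else 3 ^ k

def sortedStrategyVec (N k : ℕ) : Fin N → ℕ := fun i =>
  if (i : ℕ) + k < N then 3 ^ k else 3 ^ k - 2 * 3 ^ ((i : ℕ) + k - N)

lemma two_mul_three_pow_le {j k : ℕ} (h : j < k) : 2 * 3 ^ j ≤ 3 ^ k :=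
  calc 2 * 3 ^ j ≤ 3 ^ (j + 1) := by rw [pow_succ]; omega
    _ ≤ 3 ^ k := Nat.pow_le_pow_right (by norm_num) h

lemma vecMul_AmatN_apply {N k : ℕ} (hk : k < N) (v : Fin N → ℕ) (m : Fin N) :
    (v ᵥ* AmatN N k) m = v m + if (m : ℕ) = k then 0 else 2 * v ⟨k, hk⟩ := by
  simp only [vecMul, dotProduct, AmatN, mul_add, Finset.sum_add_distrib, mul_ite, mul_one,
    mul_zero, Finset.sum_ite_eq', Finset.mem_univ, if_true]
  split_ifs with hm
  · simp [hm]
  · rw [Finset.sum_eq_single ⟨k, hk⟩]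
    · simp [hm, mul_comm]
    · intro i _ hi
      have : (i : ℕ) ≠ k := fun h => hi (Fin.ext h)
      simp [this]
    · simp

lemma vecMul_prod_AmatN (N k : ℕ) (hk : k ≤ N) :
    (fun _ => 1) ᵥ* ((List.range k).map (AmatN N)).prod = strategyVec N k := by
  induction k with
  | zero => funext m; simp [strategyVec]
  | succ k ih =>
    have hkN : k < N := hk
    rw [List.range_succ, List.map_append, List.prod_append, List.map_singleton,
      List.prod_singleton, ← vecMul_vecMul, ih hkN.le]
    funext m
    have hpow : 3 ^ (k + 1) = 3 * 3 ^ k := by ring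
    rw [vecMul_AmatN_apply hkN]
    simp only [strategyVec, lt_irrefl, if_false]
    split_ifs <;> try omega
    · have := two_mul_three_pow_le ‹(m : ℕ) < k›; omega
    · rw [‹(m : ℕ) = k›]; omega

lemma Wmap_zero_apply {N : ℕ} (hN : 0 < N) (a : Fin N → ℕ) (i : Fin N) :
    Wmap N ⟨0, hN⟩ a i =
      if h : (i : ℕ) + 1 < N then a ⟨(i : ℕ) + 1, h⟩ + 2 * a ⟨0, hN⟩ else a ⟨0, hN⟩ := by
  simp [Wmap]

lemma iterate_Wmap_zero (N k : ℕ) (hN : 0 < N) (hk : k ≤ N) :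
    (Wmap N ⟨0, hN⟩)^[k] (fun _ => 1) = sortedStrategyVec N k := by
  induction k with
  | zero => funext i; simp [sortedStrategyVec]
  | succ k ih =>
    have hkN : k < N := hk
    rw [Function.iterate_succ_apply', ih hkN.le]
    funext i
    have hpow : 3 ^ (k + 1) = 3 * 3 ^ k := by ring
    have hlead : sortedStrategyVec N k ⟨0, hN⟩ = 3 ^ k := by
      simp [sortedStrategyVec, hkN]
    rw [Wmap_zero_apply, hlead]
    simp only [sortedStrategyVec]
    split_ifs <;> try omega
    · have := two_mul_three_pow_le (show (i : ℕ) + 1 + k - N < k by omega)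
      rw [show (i : ℕ) + (k + 1) - N = (i : ℕ) + 1 + k - N by omega]
      omega
    · rw [show (i : ℕ) + (k + 1) - N = k by omega]
      omega

lemma strategyVec_ofNat_add {N k : ℕ} [NeZero N] (hk : k ≤ N) (i : Fin N) :
    strategyVec N k (Fin.ofNat N k + i) = sortedStrategyVec N k i := by
  have hval : ((Fin.ofNat N k + i : Fin N) : ℕ) = (k + i) % N := by
    rw [Fin.val_add, Fin.val_ofNat, Nat.mod_add_mod]
  simp only [strategyVec, sortedStrategyVec, hval]
  by_cases h : (i : ℕ) + k < N
  · rw [Nat.mod_eq_of_lt (by omega), if_neg (by omega), if_pos h]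
  · rw [Nat.mod_eq_sub_mod (by omega), Nat.mod_eq_of_lt (by omega), if_pos (by omega),
      if_neg h, Nat.add_comm k]

lemma sortedStrategyVec_antitone (N k : ℕ) : Antitone (sortedStrategyVec N k) := by
  intro i j hij
  have hij' : (i : ℕ) ≤ j := hij
  simp only [sortedStrategyVec]
  split_ifs
  · rfl
  · omega
  · exact Nat.sub_le _ _
  · exact Nat.sub_le_sub_left
      (Nat.mul_le_mul_left _ (Nat.pow_le_pow_right (by norm_num) (by omega))) _

theorem stmt_18 (N k : ℕ) (hN : 0 < N) (hk : k ≤ N) :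
    ∃ σ : Equiv.Perm (Fin N),
      (∀ i, Matrix.vecMul (fun _ => 1) (((List.range k).map (AmatN N)).prod) (σ i) =
          (Wmap N ⟨0, hN⟩)^[k] (fun _ => 1) i) ∧
      (∀ i j : Fin N, i ≤ j →
          (Wmap N ⟨0, hN⟩)^[k] (fun _ => 1) j ≤ (Wmap N ⟨0, hN⟩)^[k] (fun _ => 1) i) := by
  have : NeZero N := NeZero.of_pos hN
  rw [vecMul_prod_AmatN N k hk, iterate_Wmap_zero N k hN hk]
  exact ⟨Equiv.addLeft (Fin.ofNat N k), strategyVec_ofNat_add hk,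
    fun i j hij => sortedStrategyVec_antitone N k hij⟩
end
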